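/- arXiv:1903.07701 — 5 statements merged into one kernel-verified Lean document; each statement's English description precedes it below -/
import Mathlib

section
/- Let p be an odd prime, k an integer, α an integer not divisible by p, and let χ and ψ be Dirichlet characters mod p. Suppose G : ℍ → ℂ satisfies G(Mτ) = χ(d)·χ_p(d)·(cτ+d)^k·G(τ) for every M = (a b; c d) ∈ Γ₀(p²) and every τ ∈ ℍ. Define the component-wise twist G_ψ(τ) := (1/(2p)) · ∑_{γ=1}^{p-1} ψ(γ) · ∑_{j=0}^{p-1} e(jαγ²/p) · G(τ + j/p). Then G_ψ(Mτ) = ψ(d)·χ(d)·χ_p(d)·(cτ+d)^k·G_ψ(τ) for every M = (a b; c d) ∈ Γ₀(p²) and every τ ∈ ℍ. -/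
open Complex Finset

/-- `e(x) = exp(2πix)`. -/
noncomputable def e (x : ℂ) : ℂ := Complex.exp (2 * (Real.pi : ℂ) * Complex.I * x)

/-- The component-wise twist `G_ψ` of a scalar-valued modular form `G`,
`G_ψ(τ) = (1/(2p)) ∑_{γ=1}^{p-1} ψ(γ) ∑_{j=0}^{p-1} e(jαγ²/p) G(τ + j/p)`. -/
noncomputable def componentTwist (p : ℕ) (α : ℤ) (ψ : DirichletCharacter ℂ p)
    (G : ℂ → ℂ) : ℂ → ℂ := fun τ =>
  (1 / (2 * p)) * ∑ γ ∈ Finset.Icc 1 (p - 1), ψ (γ : ZMod p) *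
    ∑ j ∈ Finset.range p, e ((j : ℂ) * (α : ℂ) * (γ : ℂ) ^ 2 / p) * G (τ + (j : ℂ) / p)

/-!
For `M = (a b; c d) ∈ Γ₀(p²)` and `j' ≡ j d² (mod p)`, the matrix `T^{j/p} M T^{-j'/p}`,
with `T^x = (1 x; 0 1)`, is again an integral matrix in `Γ₀(p²)`, with lower row
`(c, d - c j'/p)`.
Hence `G(Mτ + j/p) = χ(d) χ_p(d) (cτ+d)^k G(τ + j'/p)`. In the double sum defining `G_ψ(Mτ)`,
the substitutions `j ↦ j d²` and `γ ↦ γ d` leave the phase `e(jαγ²/p)` unchanged, and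
`ψ(γ d) = ψ(γ) ψ(d)` contributes the extra factor.
-/

lemma e_intCast_div (p : ℕ) [NeZero p] (m : ℤ) :
    e ((m : ℂ) / p) = ZMod.stdAddChar (m : ZMod p) := by
  rw [ZMod.stdAddChar_coe, e, mul_div_assoc]

lemma sum_range_eq_sum_zmod_val {M : Type*} [AddCommMonoid M] (p : ℕ) [NeZero p]
    (f : ℕ → M) : ∑ j ∈ range p, f j = ∑ x : ZMod p, f x.val :=
  sum_nbij' (fun j => (j : ZMod p)) ZMod.val (by simp) (fun x _ => by simpa using x.val_lt)
    (fun j hj => ZMod.val_cast_of_lt (mem_range.mp hj)) (fun x _ => ZMod.natCast_zmod_val x)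
    (fun j hj => by rw [ZMod.val_cast_of_lt (mem_range.mp hj)])

lemma sum_Icc_eq_sum_units_val {M : Type*} [AddCommMonoid M] (p : ℕ) [Fact p.Prime]
    (f : ℕ → M) : ∑ γ ∈ Icc 1 (p - 1), f γ = ∑ u : (ZMod p)ˣ, f (u : ZMod p).val := by
  have hlt : ∀ γ ∈ Icc 1 (p - 1), γ < p := fun γ hγ => by
    have := (Fact.out : p.Prime).pos
    rw [mem_Icc] at hγ; omega
  have hne : ∀ γ ∈ Icc 1 (p - 1), (γ : ZMod p) ≠ 0 := fun γ hγ h => by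
    rw [ZMod.natCast_eq_zero_iff] at h
    have := Nat.le_of_dvd (mem_Icc.mp hγ).1 h
    exact (hlt γ hγ).not_ge this
  refine sum_bij' (fun γ hγ => Units.mk0 _ (hne γ hγ)) (fun u _ => (u : ZMod p).val)
    (by simp) (fun u _ => ?_) (fun γ hγ => ZMod.val_cast_of_lt (hlt γ hγ)) (by simp)
    (fun γ hγ => by rw [Units.val_mk0, ZMod.val_cast_of_lt (hlt γ hγ)])
  have h0 : (u : ZMod p).val ≠ 0 := by simp [ZMod.val_eq_zero]
  have := (u : ZMod p).val_lt
  rw [mem_Icc]; omega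

lemma componentTwist_eq_sum_units (p : ℕ) [Fact p.Prime] (α : ℤ)
    (ψ : DirichletCharacter ℂ p) (G : ℂ → ℂ) (τ : ℂ) :
    componentTwist p α ψ G τ = 1 / (2 * p) * ∑ u : (ZMod p)ˣ, ψ u * ∑ x : ZMod p,
      ZMod.stdAddChar (x * (α : ZMod p) * (u : ZMod p) ^ 2) * G (τ + x.val / p) := by
  rw [componentTwist, sum_Icc_eq_sum_units_val]
  congr 2 with u
  rw [sum_range_eq_sum_zmod_val, ZMod.natCast_zmod_val]
  congr 2 with x
  have hcast : ((x.val * α * (u : ZMod p).val ^ 2 : ℤ) : ZMod p) = x * α * u ^ 2 := by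
    push_cast; simp only [ZMod.natCast_zmod_val]
  rw [← hcast, ← e_intCast_div]
  push_cast
  rfl

lemma denom_ne_zero_of_det {a b c d : ℤ} (hdet : a * d - b * c = 1) {τ : ℂ} (hτ : 0 < τ.im) :
    (c : ℂ) * τ + d ≠ 0 := by
  intro h
  have hc : c = 0 := by
    have := congrArg Complex.im h
    simp only [add_im, mul_im, intCast_re, intCast_im, zero_mul, add_zero] at this
    exact_mod_cast (mul_eq_zero.mp this).resolve_right hτ.ne'
  subst hc
  have hd : d = 0 := by simpa using h
  simp [hd] at hdet

-- `(a' b'; c d') = T^{j/p} M T^{-j'/p}`; it is integral because `j d ≡ a j' (mod p)`.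
lemma exists_mobius_add_div (p : ℕ) [NeZero p] {a b c d : ℤ} (hdet : a * d - b * c = 1)
    (hc : (p : ℤ) ^ 2 ∣ c) {j j' : ℕ} (hj : (j' : ZMod p) = j * d ^ 2) :
    ∃ a' b' d' : ℤ, a' * d' - b' * c = 1 ∧ (d' : ZMod p) = d ∧
      (∀ τ : ℂ, (c : ℂ) * (τ + j' / p) + d' = c * τ + d) ∧
      ∀ τ : ℂ, (c : ℂ) * τ + d ≠ 0 →
        ((a : ℂ) * τ + b) / (c * τ + d) + j / p = (a' * (τ + j' / p) + b') / (c * τ + d) := by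
  obtain ⟨c₀, rfl⟩ := hc
  obtain ⟨m, hm⟩ : (p : ℤ) ∣ j' - j * d * d :=
    (ZMod.intCast_eq_intCast_iff_dvd_sub _ _ _).mp (by push_cast; rw [hj]; ring)
  have hp : (p : ℂ) ≠ 0 := NeZero.ne _
  set a' : ℤ := a + j * p * c₀
  refine ⟨a', b - j * d * (p * b * c₀ + j * c₀ * d) - a' * m, d - p * c₀ * j', ?_, by simp,
    fun τ => ?_, fun τ hτ => ?_⟩
  · linear_combination
      (1 - (j : ℤ) * p * c₀ * d) * hdet - (a * p * c₀ + j * p ^ 2 * c₀ ^ 2) * hm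
  · push_cast; field_simp; ring
  · have hmC : (j' : ℂ) - j * d * d = p * m := by exact_mod_cast hm
    have hdetC : (a : ℂ) * d - b * (p ^ 2 * c₀) = 1 := by exact_mod_cast hdet
    rw [div_add_div _ _ hτ hp, div_eq_div_iff (mul_ne_zero hτ hp) hτ]
    push_cast [a']
    field_simp
    congr 1
    linear_combination (-(d : ℂ) * j) * hdetC - (a + j * p * c₀ : ℂ) * hmC

def TransformsUnderGamma0Sq (p : ℕ) (k : ℤ) (v : ZMod p → ℂ) (G : ℂ → ℂ) : Prop :=
  ∀ a b c d : ℤ, a * d - b * c = 1 → (p : ℤ) ^ 2 ∣ c → ∀ τ : ℂ, 0 < τ.im →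
    G ((a * τ + b) / (c * τ + d)) = v d * (c * τ + d) ^ k * G τ

namespace TransformsUnderGamma0Sq

variable {p : ℕ} {k : ℤ} {v : ZMod p → ℂ} {G : ℂ → ℂ}

lemma apply_add_div [NeZero p] (hG : TransformsUnderGamma0Sq p k v G) {a b c d : ℤ}
    (hdet : a * d - b * c = 1) (hc : (p : ℤ) ^ 2 ∣ c) {τ : ℂ} (hτ : 0 < τ.im) {j j' : ℕ}
    (hj : (j' : ZMod p) = j * d ^ 2) :
    G ((a * τ + b) / (c * τ + d) + j / p) = v d * (c * τ + d) ^ k * G (τ + j' / p) := by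
  obtain ⟨a', b', d', hdet', hd', hden, hmob⟩ := exists_mobius_add_div p hdet hc hj
  have hτ' : 0 < (τ + j' / p).im := by simpa using hτ
  have hG' := hG a' b' c d' hdet' hc _ hτ'
  rw [hden] at hG'
  rw [hmob τ (denom_ne_zero_of_det hdet hτ), hG', hd']

theorem componentTwist [Fact p.Prime] (hG : TransformsUnderGamma0Sq p k v G) (α : ℤ)
    (ψ : DirichletCharacter ℂ p) :
    TransformsUnderGamma0Sq p k (fun D => ψ D * v D) (componentTwist p α ψ G) := by
  intro a b c d hdet hc τ hτ
  have had : (a : ZMod p) * d = 1 := by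
    have hpc : (c : ZMod p) = 0 :=
      (ZMod.intCast_zmod_eq_zero_iff_dvd c p).mpr (dvd_trans (dvd_pow_self _ two_ne_zero) hc)
    simpa [hpc] using congrArg (Int.cast : ℤ → ZMod p) hdet
  set δ : (ZMod p)ˣ := Units.mkOfMulEqOne _ _ (mul_comm (a : ZMod p) d ▸ had)
  have translate (x : ZMod p) : G ((a * τ + b) / (c * τ + d) + x.val / p) =
      v d * (c * τ + d) ^ k * G (τ + (x * δ ^ 2 : ZMod p).val / p) :=
    hG.apply_add_div hdet hc hτ (by simp [δ])
  have reindex (u : (ZMod p)ˣ) :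
      ∑ x : ZMod p, ZMod.stdAddChar (x * (α : ZMod p) * (u * δ : ZMod p) ^ 2) *
        G (τ + (x * δ ^ 2 : ZMod p).val / p) =
      ∑ x : ZMod p,
        ZMod.stdAddChar (x * (α : ZMod p) * (u : ZMod p) ^ 2) * G (τ + x.val / p) := by
    refine Fintype.sum_equiv (Units.mulRight (δ ^ 2)) _ _ fun x => ?_
    rw [Units.mulRight_apply, Units.val_pow_eq_pow_val]
    ring_nf
  rw [componentTwist_eq_sum_units, componentTwist_eq_sum_units,
    ← Equiv.sum_comp (Equiv.mulRight δ)]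
  simp only [translate, Equiv.coe_mulRight, mul_left_comm _ (v d * _), ← mul_sum,
    Units.val_mul, reindex, map_mul, mul_right_comm _ (ψ δ), ← sum_mul]
  rw [show (δ : ZMod p) = d from rfl]
  ring

end TransformsUnderGamma0Sq

theorem twist_transformation_general (p : ℕ) [Fact p.Prime] (k : ℤ) (α : ℤ)
    (χ ψ : DirichletCharacter ℂ p) (G : ℂ → ℂ)
    (hG : ∀ a b c d : ℤ, a * d - b * c = 1 → ((p : ℤ) ^ 2 ∣ c) →
      ∀ τ : ℂ, 0 < τ.im →
        G (((a : ℂ) * τ + b) / ((c : ℂ) * τ + d)) =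
          χ (d : ZMod p) * (legendreSym p d : ℂ) * ((c : ℂ) * τ + d) ^ k * G τ) :
    ∀ a b c d : ℤ, a * d - b * c = 1 → ((p : ℤ) ^ 2 ∣ c) →
      ∀ τ : ℂ, 0 < τ.im →
        componentTwist p α ψ G (((a : ℂ) * τ + b) / ((c : ℂ) * τ + d)) =
          ψ (d : ZMod p) * χ (d : ZMod p) * (legendreSym p d : ℂ) *
            ((c : ℂ) * τ + d) ^ k * componentTwist p α ψ G τ := by
  -- `legendreSym p d` is by definition `quadraticChar (ZMod p) d`, a function of `d mod p`.
  have hG' : TransformsUnderGamma0Sq p k (fun D => χ D * (quadraticChar (ZMod p) D : ℂ)) G := hG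
  intro a b c d hdet hc τ hτ
  rw [hG'.componentTwist α ψ a b c d hdet hc τ hτ, legendreSym]
  ring

theorem twist_transformation (p : ℕ) [Fact p.Prime] (hp2 : p ≠ 2) (k : ℤ) (α : ℤ)
    (hα : ¬ (p : ℤ) ∣ α) (χ ψ : DirichletCharacter ℂ p) (G : ℂ → ℂ)
    (hG : ∀ a b c d : ℤ, a * d - b * c = 1 → ((p : ℤ) ^ 2 ∣ c) →
      ∀ τ : ℂ, 0 < τ.im →
        G (((a : ℂ) * τ + b) / ((c : ℂ) * τ + d)) =
          χ (d : ZMod p) * (legendreSym p d : ℂ) * ((c : ℂ) * τ + d) ^ k * G τ) :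
    ∀ a b c d : ℤ, a * d - b * c = 1 → ((p : ℤ) ^ 2 ∣ c) →
      ∀ τ : ℂ, 0 < τ.im →
        componentTwist p α ψ G (((a : ℂ) * τ + b) / ((c : ℂ) * τ + d)) =
          ψ (d : ZMod p) * χ (d : ZMod p) * (legendreSym p d : ℂ) *
            ((c : ℂ) * τ + d) ^ k * componentTwist p α ψ G τ :=
  twist_transformation_general p k α χ ψ G hG
end

section
/- Let p be an odd prime, k an integer, α an integer not divisible by p, and χ a Dirichlet character mod p. Suppose that for each γ ∈ ℤ/pℤ a function F_γ : ℍ → ℂ is given, and that for every N = (a b; c d) ∈ Γ₀(p), every γ ∈ ℤ/pℤ and every τ ∈ ℍ one has F_γ(Nτ) = χ_p(d)·(cτ+d)^k·F_{d⁻¹γ}(τ), where d⁻¹ denotes an inverse of d modulo p (d is invertible mod p since ad − bc = 1 and p divides c). Define G(τ) := ∑_{γ ∈ (ℤ/pℤ)^×} χ(γ)·F_γ(pτ). Then G(Mτ) = χ(d)·χ_p(d)·(cτ+d)^k·G(τ) for every M = (a b; c d) ∈ Γ₀(p²) and every τ ∈ ℍ. -/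
open Complex Finset

theorem twisted_component_sum_transformation (p : ℕ) [Fact p.Prime] (hp2 : p ≠ 2)
    (k : ℤ) (α : ℤ) (hα : ¬ (p : ℤ) ∣ α) (χ : DirichletCharacter ℂ p)
    (F : ZMod p → ℂ → ℂ)
    (hF : ∀ a b c d : ℤ, a * d - b * c = 1 → ((p : ℤ) ∣ c) →
      ∀ γ : ZMod p, ∀ τ : ℂ, 0 < τ.im →
        F γ (((a : ℂ) * τ + b) / ((c : ℂ) * τ + d)) =
          (legendreSym p d : ℂ) * ((c : ℂ) * τ + d) ^ k * F (((d : ZMod p))⁻¹ * γ) τ)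
    (G : ℂ → ℂ)
    (hG : ∀ τ : ℂ, G τ = ∑ γ : (ZMod p)ˣ, χ (γ : ZMod p) * F (γ : ZMod p) ((p : ℂ) * τ)) :
    ∀ a b c d : ℤ, a * d - b * c = 1 → ((p : ℤ) ^ 2 ∣ c) →
      ∀ τ : ℂ, 0 < τ.im →
        G (((a : ℂ) * τ + b) / ((c : ℂ) * τ + d)) =
          χ (d : ZMod p) * (legendreSym p d : ℂ) * ((c : ℂ) * τ + d) ^ k * G τ := by
  intro a b c d hdet hc τ hτ
  obtain ⟨c', hc'⟩ := hc
  have hp0 : (0:ℝ) < (p:ℝ) := by exact_mod_cast (Fact.out : p.Prime).pos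
  have hptau : 0 < ((p:ℂ) * τ).im := by
    have : ((p:ℂ) * τ).im = (p:ℝ) * τ.im := by
      simp [Complex.mul_im]
    rw [this]; positivity
  have hdet' : a * d - (p * b) * (p * c') = 1 := by
    rw [← hdet, hc']; ring
  have hcz : ((p*c' : ℤ) : ℂ) * ((p:ℂ) * τ) + (d:ℂ) = (c:ℂ) * τ + d := by
    rw [hc']; push_cast; ring
  -- key identity: p * Mτ = N(pτ)
  have hpt : (p:ℂ) * (((a : ℂ) * τ + b) / ((c:ℂ) * τ + d)) =
      ((a : ℂ) * ((p:ℂ) * τ) + ((p:ℤ) * b : ℤ)) /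
        (((p:ℤ) * c' : ℤ) * ((p:ℂ) * τ) + d) := by
    rw [hcz, mul_div_assoc']
    congr 1
    push_cast; ring
  -- d is a unit mod p
  have hda : (d : ZMod p) * (a : ZMod p) = 1 := by
    have : ((a * d - (p*b) * (p*c') : ℤ) : ZMod p) = 1 := by rw [hdet']; simp
    push_cast at this
    simp [ZMod.natCast_self] at this
    rw [mul_comm]; exact this
  have hdne : (d : ZMod p) ≠ 0 := by
    intro h0; rw [h0, zero_mul] at hda; exact zero_ne_one hda
  set u : (ZMod p)ˣ := ⟨(d : ZMod p), (a : ZMod p), hda, by rw [mul_comm]; exact hda⟩ with hu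
  rw [hG, hG]
  have step : ∀ γ : (ZMod p)ˣ,
      F (γ : ZMod p) ((p:ℂ) * (((a : ℂ) * τ + b) / ((c:ℂ) * τ + d))) =
      (legendreSym p d : ℂ) * ((c:ℂ) * τ + d) ^ k *
        F (((d : ZMod p))⁻¹ * (γ : ZMod p)) ((p:ℂ) * τ) := by
    intro γ
    rw [hpt, ← hcz]
    exact hF a ((p:ℤ)*b) ((p:ℤ)*c') d hdet' ⟨c', rfl⟩ (γ : ZMod p) ((p:ℂ)*τ) hptau
  calc ∑ γ : (ZMod p)ˣ, χ (γ : ZMod p) *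
        F (γ : ZMod p) ((p:ℂ) * (((a : ℂ) * τ + b) / ((c:ℂ) * τ + d)))
      = ∑ γ : (ZMod p)ˣ, (legendreSym p d : ℂ) * ((c:ℂ) * τ + d) ^ k *
          (χ (γ : ZMod p) * F (((d : ZMod p))⁻¹ * (γ : ZMod p)) ((p:ℂ) * τ)) := by
        refine Finset.sum_congr rfl fun γ _ => ?_
        rw [step γ]; ring
    _ = (legendreSym p d : ℂ) * ((c:ℂ) * τ + d) ^ k *
          ∑ γ : (ZMod p)ˣ, χ (γ : ZMod p) * F (((d : ZMod p))⁻¹ * (γ : ZMod p)) ((p:ℂ) * τ) := by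
        rw [Finset.mul_sum]
    _ = χ (d : ZMod p) * (legendreSym p d : ℂ) * ((c:ℂ) * τ + d) ^ k *
          ∑ γ : (ZMod p)ˣ, χ (γ : ZMod p) * F (γ : ZMod p) ((p:ℂ) * τ) := by
        rw [← Equiv.sum_comp (Equiv.mulLeft u) (fun γ : (ZMod p)ˣ =>
          χ (γ : ZMod p) * F (((d : ZMod p))⁻¹ * (γ : ZMod p)) ((p:ℂ) * τ))]
        simp only [Equiv.coe_mulLeft, Units.val_mul]
        have hinv : ∀ γ : (ZMod p)ˣ,
            ((d : ZMod p))⁻¹ * ((u : ZMod p) * (γ : ZMod p)) = (γ : ZMod p) := by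
          intro γ
          show ((d : ZMod p))⁻¹ * ((d : ZMod p) * (γ : ZMod p)) = (γ : ZMod p)
          rw [← mul_assoc, inv_mul_cancel₀ hdne, one_mul]
        have hmul : ∀ γ : (ZMod p)ˣ, χ ((u : ZMod p) * (γ : ZMod p)) =
            χ (d : ZMod p) * χ (γ : ZMod p) := fun γ => map_mul χ _ _
        rw [Finset.sum_congr rfl fun γ _ => by rw [hinv γ, hmul γ]]
        rw [Finset.mul_sum, Finset.mul_sum]
        congr 1; ext γ; ring
end

section
/- Let p be an odd prime, α an integer not divisible by p, and χ a Dirichlet character mod p. Suppose that for each γ ∈ ℤ/pℤ a function F_γ : ℍ → ℂ is given satisfying F_γ(τ+1) = e(−αγ̃²/p)·F_γ(τ) for all τ ∈ ℍ. Define G(τ) := ∑_{γ ∈ (ℤ/pℤ)^×} χ(γ)·F_γ(pτ). Then for every integer m such that either p divides m or χ_p(−m) ≠ χ_p(α), one has ∑_{j=0}^{p-1} e(−jm/p)·G(τ + j/p) = 0 for all τ ∈ ℍ. (This says that G satisfies the ε-condition: its Fourier coefficients c(n) vanish unless n ∈ p(ℤ − αγ²/p) for some γ ∈ (ℤ/pℤ)^×,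 equivalently unless χ_p(−n) = χ_p(α).) -/
open Complex Finset

lemma e_add (x y : ℂ) : e (x + y) = e x * e y := by
  rw [e, e, e, ← Complex.exp_add]; ring_nf

lemma e_pow (x : ℂ) (n : ℕ) : e x ^ n = e ((n : ℂ) * x) := by
  rw [e, e, ← Complex.exp_nat_mul]; ring_nf

lemma e_int (k : ℤ) : e (k : ℂ) = 1 := by
  rw [e]
  rw [show 2 * (Real.pi : ℂ) * Complex.I * (k : ℂ)
      = (k : ℂ) * (2 * (Real.pi : ℂ) * Complex.I) by ring]
  exact Complex.exp_int_mul_two_pi_mul_I k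

lemma e_ne_one {k : ℤ} {p : ℕ} (hp : p ≠ 0) (h : ¬ (p : ℤ) ∣ k) :
    e (-(k : ℂ) / p) ≠ 1 := by
  intro h1
  rw [e, Complex.exp_eq_one_iff] at h1
  obtain ⟨n, hn⟩ := h1
  have hπ : (2 * (Real.pi : ℂ) * Complex.I) ≠ 0 := by
    simp [Real.pi_ne_zero, Complex.I_ne_zero]
  have h2 : -(k : ℂ) / p = n := by
    apply mul_left_cancel₀ hπ
    rw [hn]; ring
  have hp0 : (p : ℂ) ≠ 0 := Nat.cast_ne_zero.mpr hp
  have h3 : -(k : ℂ) = (n : ℂ) * p := by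
    field_simp at h2; linear_combination h2
  have h4 : -k = n * (p : ℤ) := by exact_mod_cast h3
  exact h ⟨-n, by linarith [h4]⟩

theorem twisted_component_sum_epsilon_condition (p : ℕ) [Fact p.Prime] (hp2 : p ≠ 2)
    (α : ℤ) (hα : ¬ (p : ℤ) ∣ α) (χ : DirichletCharacter ℂ p)
    (F : ZMod p → ℂ → ℂ)
    (hF : ∀ γ : ZMod p, ∀ τ : ℂ, 0 < τ.im →
      F γ (τ + 1) = e (-((α : ℂ) * (γ.val : ℂ) ^ 2 / p)) * F γ τ)
    (G : ℂ → ℂ)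
    (hG : ∀ τ : ℂ, G τ = ∑ γ : (ZMod p)ˣ, χ (γ : ZMod p) * F (γ : ZMod p) ((p : ℂ) * τ)) :
    ∀ m : ℤ, ((p : ℤ) ∣ m ∨ legendreSym p (-m) ≠ legendreSym p α) →
      ∀ τ : ℂ, 0 < τ.im →
        ∑ j ∈ Finset.range p, e (-((j : ℂ) * (m : ℂ) / p)) * G (τ + (j : ℂ) / p) = 0 := by
  intro m hm τ hτ
  have hpp : p.Prime := Fact.out
  have hpne : p ≠ 0 := hpp.ne_zero
  have hp0 : (p : ℂ) ≠ 0 := Nat.cast_ne_zero.mpr hpne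
  -- iterated translation law
  have key : ∀ γ : ZMod p, ∀ σ : ℂ, 0 < σ.im → ∀ j : ℕ,
      F γ (σ + j) = e ((j : ℂ) * (-((α : ℂ) * (γ.val : ℂ) ^ 2 / p))) * F γ σ := by
    intro γ σ hσ j
    induction j with
    | zero => simp [e]
    | succ j ih =>
      have him : 0 < (σ + (j : ℂ)).im := by simpa using hσ
      have h1 := hF γ (σ + (j : ℂ)) him
      have h2 : σ + ((j : ℕ) + 1 : ℕ) = (σ + (j : ℂ)) + 1 := by push_cast; ring
      rw [h2, h1, ih]
      rw [show ((((j : ℕ) + 1 : ℕ) : ℂ)) * (-((α : ℂ) * (γ.val : ℂ) ^ 2 / p))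
          = (-((α : ℂ) * (γ.val : ℂ) ^ 2 / p)) + (j : ℂ) * (-((α : ℂ) * (γ.val : ℂ) ^ 2 / p)) by
        push_cast; ring]
      rw [e_add]; ring
  -- the integers m + α γ² are not divisible by p
  have hknd : ∀ γ : (ZMod p)ˣ, ¬ (p : ℤ) ∣ (m + α * (((γ : ZMod p).val : ℤ)) ^ 2) := by
    intro γ hd
    have hγ0 : ((γ : (ZMod p)ˣ) : ZMod p) ≠ 0 := γ.ne_zero
    have hcast : ((m + α * (((γ : ZMod p).val : ℤ)) ^ 2 : ℤ) : ZMod p) = 0 :=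
      (ZMod.intCast_zmod_eq_zero_iff_dvd _ p).mpr hd
    push_cast [ZMod.natCast_val, ZMod.cast_id] at hcast
    rcases hm with hm | hm
    · have hm0 : (m : ZMod p) = 0 := (ZMod.intCast_zmod_eq_zero_iff_dvd m p).mpr hm
      rw [hm0, zero_add] at hcast
      rcases mul_eq_zero.mp hcast with h | h
      · exact hα ((ZMod.intCast_zmod_eq_zero_iff_dvd α p).mp h)
      · exact hγ0 (pow_eq_zero_iff two_ne_zero |>.mp h)
    · apply hm
      have hg0 : (((((γ : ZMod p).val : ℤ)) : ℤ) : ZMod p) ≠ 0 := by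
        push_cast [ZMod.natCast_val, ZMod.cast_id]; exact hγ0
      have hc2 : ((-m : ℤ) : ZMod p) = ((α * (((γ : ZMod p).val : ℤ)) ^ 2 : ℤ) : ZMod p) := by
        push_cast [ZMod.natCast_val, ZMod.cast_id]
        linear_combination -hcast
      have h3 : legendreSym p (-m) = legendreSym p (α * (((γ : ZMod p).val : ℤ)) ^ 2) := by
        unfold legendreSym
        rw [hc2]
      rw [h3, show α * (((γ : ZMod p).val : ℤ)) ^ 2
          = α * ((((γ : ZMod p).val : ℤ)) * (((γ : ZMod p).val : ℤ))) by ring,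
        legendreSym.mul, legendreSym.mul,
        show legendreSym p (((γ : ZMod p).val : ℤ)) * legendreSym p (((γ : ZMod p).val : ℤ))
          = legendreSym p (((γ : ZMod p).val : ℤ)) ^ 2 by ring,
        legendreSym.sq_one p hg0, mul_one]
  -- main computation
  have him' : 0 < ((p : ℂ) * τ).im := by
    simp only [Complex.mul_im, Complex.natCast_re, Complex.natCast_im, zero_mul, add_zero]
    positivity
  have step : ∀ j ∈ Finset.range p,
      e (-((j : ℂ) * (m : ℂ) / p)) * G (τ + (j : ℂ) / p)
      = ∑ γ : (ZMod p)ˣ, (χ (γ : ZMod p) * F (γ : ZMod p) ((p : ℂ) * τ)) *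
          (e (-(((m + α * (((γ : ZMod p).val : ℤ)) ^ 2 : ℤ) : ℂ)) / p)) ^ j := by
    intro j _
    rw [hG, Finset.mul_sum]
    apply Finset.sum_congr rfl
    intro γ _
    have harg : (p : ℂ) * (τ + (j : ℂ) / p) = (p : ℂ) * τ + ((j : ℕ) : ℂ) := by
      field_simp
    rw [harg, key (γ : ZMod p) ((p : ℂ) * τ) him' j, e_pow]
    have hmul : e (-((j : ℂ) * (m : ℂ) / p)) *
        e ((j : ℂ) * (-((α : ℂ) * (((γ : ZMod p).val : ℂ)) ^ 2 / p)))
        = e ((j : ℂ) * (-(((m + α * (((γ : ZMod p).val : ℤ)) ^ 2 : ℤ) : ℂ)) / p)) := by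
      rw [← e_add]; congr 1; push_cast; ring
    rw [← hmul]; ring
  calc ∑ j ∈ Finset.range p, e (-((j : ℂ) * (m : ℂ) / p)) * G (τ + (j : ℂ) / p)
      = ∑ j ∈ Finset.range p, ∑ γ : (ZMod p)ˣ,
          (χ (γ : ZMod p) * F (γ : ZMod p) ((p : ℂ) * τ)) *
          (e (-(((m + α * (((γ : ZMod p).val : ℤ)) ^ 2 : ℤ) : ℂ)) / p)) ^ j :=
        Finset.sum_congr rfl step
    _ = ∑ γ : (ZMod p)ˣ, (χ (γ : ZMod p) * F (γ : ZMod p) ((p : ℂ) * τ)) *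
          ∑ j ∈ Finset.range p,
            (e (-(((m + α * (((γ : ZMod p).val : ℤ)) ^ 2 : ℤ) : ℂ)) / p)) ^ j := by
        rw [Finset.sum_comm]
        exact Finset.sum_congr rfl fun γ _ => (Finset.mul_sum _ _ _).symm
    _ = 0 := by
        apply Finset.sum_eq_zero
        intro γ _
        rw [geom_sum_eq (e_ne_one hpne (hknd γ)), e_pow,
          show ((p : ℕ) : ℂ) * (-(((m + α * (((γ : ZMod p).val : ℤ)) ^ 2 : ℤ) : ℂ)) / p)
            = ((-(m + α * (((γ : ZMod p).val : ℤ)) ^ 2) : ℤ) : ℂ) by push_cast; field_simp,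
          e_int]
        simp
end

section
/- Let p be an odd prime, k an integer, α an integer not divisible by p, and set σ := χ_p(α)·ε_p. Suppose that for each γ ∈ ℤ/pℤ a function F_γ : ℍ → ℂ is given satisfying F_γ(−1/τ) = (σ/√p)·τ^k·∑_{β ∈ ℤ/pℤ} e(2αβ̃γ̃/p)·F_β(τ) for all γ and all τ ∈ ℍ. Let χ and ψ be Dirichlet characters mod p, and define G_ψ(τ) := ∑_{γ ∈ (ℤ/pℤ)^×} ψ(γ)χ(γ)·F_γ(pτ) and H(τ) := ∑_{β ∈ (ℤ/pℤ)^×} conj(ψ(β)χ(β))·F_β(pτ). Then for all τ ∈ ℍ: p^k·(p²τ)^{−k}·G_ψ(−1/(p²τ)) = (σ/√p)·( conj(ψ(2α)χ(2α))·g(ψχ)·H(τ) + δ·(p−1)·F_0(pτ) ), where g(ψχ) := ∑_{n=1}^{p-1} ψ(n)χ(n)·e(n/p), and δ = 1 if ψχ is the principal character mod p and δ = 0 otherwise. (This is the Atkin–Lehner transformation of the twisted component sums of a vector-valued modular form, showing that the image of φ_χ satisfies the Atkin–Lehner condition.) -/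
open Complex Finset
open scoped Classical

/-- `ε_p = 1` if `p ≡ 1 (mod 4)` and `ε_p = i` if `p ≡ 3 (mod 4)`. -/
noncomputable def εp (p : ℕ) : ℂ := if p % 4 = 1 then 1 else Complex.I

lemma e_add_int (x : ℂ) (t : ℤ) : e (x + t) = e x := by
  unfold e
  rw [mul_add, Complex.exp_add]
  rw [show 2 * (Real.pi : ℂ) * Complex.I * t = t * (2 * Real.pi * Complex.I) by ring]
  rw [Complex.exp_int_mul_two_pi_mul_I, mul_one]

lemma e_zero : e 0 = 1 := by simp [e]

section
variable (p : ℕ) [NeZero p]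

noncomputable def ep (x : ZMod p) : ℂ := e ((x.val : ℂ) / p)

lemma e_int_s6 (m : ℤ) : e ((m : ℂ) / p) = ep p (m : ZMod p) := by
  have hd : (p : ℤ) ∣ m - ((m : ZMod p).val : ℤ) := by
    rw [← ZMod.intCast_zmod_eq_zero_iff_dvd]
    push_cast
    simp
  obtain ⟨t, ht⟩ := hd
  set v : ℕ := (m : ZMod p).val with hv
  have hm : (m : ℂ) = (v : ℂ) + (t : ℂ) * p := by
    have h1 : m = (v : ℤ) + p * t := by omega
    have := congrArg (Int.cast : ℤ → ℂ) h1
    push_cast at this; rw [this]; ring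
  have hp : (p : ℂ) ≠ 0 := Nat.cast_ne_zero.mpr (NeZero.ne p)
  rw [ep, hm]
  rw [show ((v : ℂ) + (t:ℂ) * p) / p = (v : ℂ)/p + t by field_simp]
  exact e_add_int _ t

lemma ep_zero : ep p 0 = 1 := by
  simp [ep, ZMod.val_zero, e_zero]

lemma e_cast (α : ℤ) (β γ : ZMod p) :
    e (2 * (α:ℂ) * (β.val:ℂ) * (γ.val:ℂ) / p) = ep p (((2*α : ℤ) : ZMod p) * β * γ) := by
  have h1 : (2*(α:ℂ)*(β.val:ℂ)*(γ.val:ℂ)) = ((2*α*(β.val : ℤ)*(γ.val : ℤ) : ℤ) : ℂ) := by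
    push_cast; ring
  rw [h1, e_int_s6]
  congr 1
  push_cast
  simp [ZMod.natCast_val, ZMod.cast_id]

end

section
variable (p : ℕ) [Fact p.Prime]

lemma sum_erase_units (f : ZMod p → ℂ) :
    ∑ x ∈ Finset.univ.erase (0 : ZMod p), f x = ∑ u : (ZMod p)ˣ, f ↑u := by
  refine Finset.sum_bij (fun x hx => (isUnit_iff_ne_zero.mpr (Finset.ne_of_mem_erase hx)).unit)
    (fun _ _ => Finset.mem_univ _) ?_ ?_ ?_
  · intro a ha b hb hab
    have := congrArg (fun u : (ZMod p)ˣ => (u : ZMod p)) hab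
    simpa [IsUnit.unit_spec] using this
  · intro u _
    refine ⟨(u : ZMod p), Finset.mem_erase.mpr ⟨u.ne_zero, Finset.mem_univ _⟩, ?_⟩
    ext; simp [IsUnit.unit_spec]
  · intro a ha; simp [IsUnit.unit_spec]

lemma sum_units_eq (f : ZMod p → ℂ) (h0 : f 0 = 0) :
    ∑ u : (ZMod p)ˣ, f ↑u = ∑ x : ZMod p, f x := by
  rw [← sum_erase_units]
  rw [← Finset.add_sum_erase _ f (Finset.mem_univ (0 : ZMod p)), h0, zero_add]

lemma conj_char (D : DirichletCharacter ℂ p) (w : (ZMod p)ˣ) :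
    (starRingEnd ℂ) (D ↑w) = D ↑(w⁻¹) := by
  have h1 : star (D ↑w) = D⁻¹ ↑w := MulChar.star_apply' D ↑w
  have h2 : D⁻¹ (↑w) = D (Ring.inverse (↑w : ZMod p)) := MulChar.inv_apply D _
  rw [show (starRingEnd ℂ) (D ↑w) = star (D ↑w) from rfl, h1, h2, Ring.inverse_unit]

lemma sum_char (D : DirichletCharacter ℂ p) :
    ∑ u : (ZMod p)ˣ, D ↑u = (if D = 1 then (1:ℂ) else 0) * ((p:ℂ) - 1) := by
  by_cases hD : D = 1
  · rw [hD]; simp only [MulChar.one_apply_coe, Finset.sum_const, Finset.card_univ,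
      ZMod.card_units, nsmul_eq_mul, mul_one, if_pos rfl, one_mul]
    have : (1:ℕ) ≤ p := (Fact.out : p.Prime).one_lt.le
    push_cast [Nat.cast_sub this]
    ring
  · rw [if_neg hD, zero_mul]
    rw [sum_units_eq p (fun x => D x) D.map_zero]
    exact MulChar.sum_eq_zero_of_ne_one hD

lemma twist_sum (D : DirichletCharacter ℂ p) (w : (ZMod p)ˣ) :
    ∑ γ : (ZMod p)ˣ, D ↑γ * ep p (↑w * ↑γ) =
      (starRingEnd ℂ) (D ↑w) * ∑ γ : (ZMod p)ˣ, D ↑γ * ep p ↑γ := by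
  rw [conj_char]
  rw [← Equiv.sum_comp (Equiv.mulLeft w⁻¹) (fun γ : (ZMod p)ˣ => D ↑γ * ep p (↑w * ↑γ))]
  rw [Finset.mul_sum]
  refine Finset.sum_congr rfl fun γ _ => ?_
  have h1 : ((Equiv.mulLeft w⁻¹) γ : ZMod p) = ↑(w⁻¹) * ↑γ := by rw [Equiv.coe_mulLeft, Units.val_mul]
  have h2 : (↑w : ZMod p) * (↑(w⁻¹) * ↑γ) = ↑γ := by
    rw [← mul_assoc, ← Units.val_mul, mul_inv_cancel, Units.val_one, one_mul]
  rw [h1, h2, map_mul]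
  ring

lemma gauss_eq (D : DirichletCharacter ℂ p) :
    (∑ n ∈ Finset.Icc 1 (p - 1), D (n : ZMod p) * e ((n : ℂ) / p)) =
      ∑ u : (ZMod p)ˣ, D ↑u * ep p ↑u := by
  have hp1 : 1 < p := (Fact.out : p.Prime).one_lt
  refine Finset.sum_bij (fun (n : ℕ) (hn : n ∈ Finset.Icc 1 (p-1)) =>
      (isUnit_iff_ne_zero.mpr (show ((n : ZMod p)) ≠ 0 from ?_)).unit)
    (fun _ _ => Finset.mem_univ _) ?_ ?_ ?_
  · -- nonzero
    rw [Finset.mem_Icc] at hn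
    have hlt : n < p := by omega
    rw [Ne, ← ZMod.val_eq_zero, ZMod.val_cast_of_lt hlt]
    omega
  · intro a ha b hb hab
    have := congrArg (fun u : (ZMod p)ˣ => ((u : ZMod p)).val) hab
    simp only [IsUnit.unit_spec] at this
    rw [Finset.mem_Icc] at ha hb
    rwa [ZMod.val_cast_of_lt (by omega), ZMod.val_cast_of_lt (by omega)] at this
  · intro u _
    refine ⟨((u : ZMod p)).val, ?_, ?_⟩
    · rw [Finset.mem_Icc]
      have h1 : ((u : ZMod p)).val < p := ZMod.val_lt _
      have h2 : ((u : ZMod p)).val ≠ 0 := by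
        rw [Ne, ZMod.val_eq_zero]; exact u.ne_zero
      omega
    · ext
      simp [IsUnit.unit_spec, ZMod.natCast_val, ZMod.cast_id]
  · intro n hn
    simp only [IsUnit.unit_spec]
    rw [Finset.mem_Icc] at hn
    rw [ep, ZMod.val_cast_of_lt (by omega)]

end

theorem atkin_lehner_transformation_of_twisted_sums (p : ℕ) [Fact p.Prime] (hp2 : p ≠ 2)
    (k : ℤ) (α : ℤ) (hα : ¬ (p : ℤ) ∣ α) (σ : ℂ)
    (hσ : σ = (legendreSym p α : ℂ) * εp p)
    (F : ZMod p → ℂ → ℂ)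
    (hS : ∀ γ : ZMod p, ∀ τ : ℂ, 0 < τ.im →
      F γ (-1 / τ) = (σ / Real.sqrt p) * τ ^ k *
        ∑ β : ZMod p, e (2 * (α : ℂ) * (β.val : ℂ) * (γ.val : ℂ) / p) * F β τ)
    (χ ψ : DirichletCharacter ℂ p)
    (Gψ H : ℂ → ℂ)
    (hGψ : ∀ τ : ℂ, Gψ τ =
      ∑ γ : (ZMod p)ˣ, ψ (γ : ZMod p) * χ (γ : ZMod p) * F (γ : ZMod p) ((p : ℂ) * τ))
    (hH : ∀ τ : ℂ, H τ =
      ∑ β : (ZMod p)ˣ, (starRingEnd ℂ) (ψ (β : ZMod p) * χ (β : ZMod p)) *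
        F (β : ZMod p) ((p : ℂ) * τ)) :
    ∀ τ : ℂ, 0 < τ.im →
      (p : ℂ) ^ k * ((p : ℂ) ^ 2 * τ) ^ (-k) * Gψ (-1 / ((p : ℂ) ^ 2 * τ)) =
        (σ / Real.sqrt p) *
          ((starRingEnd ℂ) (ψ ((2 * α : ℤ) : ZMod p) * χ ((2 * α : ℤ) : ZMod p)) *
              (∑ n ∈ Finset.Icc 1 (p - 1),
                ψ (n : ZMod p) * χ (n : ZMod p) * e ((n : ℂ) / p)) * H τ +
            (if ψ * χ = 1 then (1 : ℂ) else 0) * (p - 1) * F 0 ((p : ℂ) * τ)) := by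
  intro τ hτ
  have hp' : p.Prime := Fact.out
  have hp0 : (p : ℂ) ≠ 0 := Nat.cast_ne_zero.mpr hp'.ne_zero
  have hτ0 : τ ≠ 0 := by
    intro h; rw [h] at hτ; simp at hτ
  set D : DirichletCharacter ℂ p := ψ * χ with hD
  have hDapp : ∀ x : ZMod p, ψ x * χ x = D x := by
    intro x; rw [hD, MulChar.coeToFun_mul, Pi.mul_apply]
  set c : ZMod p := ((2 * α : ℤ) : ZMod p) with hc
  have hc0 : c ≠ 0 := by
    rw [hc, Ne, ZMod.intCast_zmod_eq_zero_iff_dvd]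
    intro h
    rcases ((Nat.prime_iff_prime_int.mp hp').dvd_mul.mp h) with h2 | h2
    · have h3 : p ∣ 2 := by exact_mod_cast h2
      have h4 := Nat.le_of_dvd (by norm_num) h3
      have h5 := hp'.two_le
      omega
    · exact hα h2
  obtain ⟨uc, huc⟩ : IsUnit c := isUnit_iff_ne_zero.mpr hc0
  have hti : 0 < ((p : ℂ) * τ).im := by
    have h : ((p:ℂ) * τ).im = (p:ℝ) * τ.im := by simp [Complex.mul_im]
    rw [h]
    have hp : (0:ℝ) < p := by exact_mod_cast hp'.pos
    positivity
  -- rewrite argument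
  rw [hGψ]
  rw [show (p:ℂ) * (-1 / ((p:ℂ)^2 * τ)) = -1 / ((p:ℂ) * τ) by field_simp]
  -- apply S-transform and convert exponentials
  have step1 : ∀ γ : (ZMod p)ˣ, F ↑γ (-1 / ((p:ℂ) * τ)) =
      (σ / Real.sqrt p) * ((p:ℂ) * τ) ^ k *
        ∑ β : ZMod p, ep p (c * β * ↑γ) * F β ((p:ℂ) * τ) := by
    intro γ
    rw [hS ↑γ _ hti]
    congr 1
    refine Finset.sum_congr rfl fun β _ => ?_
    rw [e_cast p α β ↑γ]
  have step2 : (∑ γ : (ZMod p)ˣ, ψ ↑γ * χ ↑γ * F ↑γ (-1 / ((p:ℂ) * τ))) =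
      (σ / Real.sqrt p) * ((p:ℂ) * τ) ^ k *
        ∑ γ : (ZMod p)ˣ, D ↑γ * ∑ β : ZMod p, ep p (c * β * ↑γ) * F β ((p:ℂ) * τ) := by
    rw [Finset.mul_sum]
    refine Finset.sum_congr rfl fun γ _ => ?_
    rw [step1 γ, hDapp]
    ring
  rw [step2]
  -- prefactor equals 1
  have hone : (p:ℂ)^k * ((p:ℂ)^2 * τ)^(-k) * ((p:ℂ) * τ)^k = 1 := by
    rw [show ((p:ℂ)^2 * τ) = (p:ℂ) * ((p:ℂ) * τ) by ring]
    simp only [mul_zpow, zpow_neg]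
    have h1 : (p:ℂ)^k ≠ 0 := zpow_ne_zero _ hp0
    have h2 : τ^k ≠ 0 := zpow_ne_zero _ hτ0
    field_simp
  -- central combinatorial identity
  have central : (∑ γ : (ZMod p)ˣ, D ↑γ * ∑ β : ZMod p, ep p (c * β * ↑γ) * F β ((p:ℂ) * τ)) =
      (starRingEnd ℂ) (D c) * (∑ u : (ZMod p)ˣ, D ↑u * ep p ↑u) *
        (∑ β : (ZMod p)ˣ, (starRingEnd ℂ) (D ↑β) * F ↑β ((p:ℂ) * τ)) +
      (if D = 1 then (1:ℂ) else 0) * ((p:ℂ) - 1) * F 0 ((p:ℂ) * τ) := by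
    -- swap sums
    have swap : (∑ γ : (ZMod p)ˣ, D ↑γ * ∑ β : ZMod p, ep p (c * β * ↑γ) * F β ((p:ℂ) * τ)) =
        ∑ β : ZMod p, (∑ γ : (ZMod p)ˣ, D ↑γ * ep p (c * β * ↑γ)) * F β ((p:ℂ) * τ) := by
      simp_rw [Finset.mul_sum, Finset.sum_mul]
      rw [Finset.sum_comm]
      exact Finset.sum_congr rfl fun β _ => Finset.sum_congr rfl fun γ _ => by ring
    rw [swap]
    rw [← Finset.add_sum_erase _ _ (Finset.mem_univ (0 : ZMod p))]
    have hβ0 : (∑ γ : (ZMod p)ˣ, D ↑γ * ep p (c * 0 * ↑γ)) * F 0 ((p:ℂ) * τ) =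
        (if D = 1 then (1:ℂ) else 0) * ((p:ℂ) - 1) * F 0 ((p:ℂ) * τ) := by
      simp only [mul_zero, zero_mul, ep_zero, mul_one]
      rw [sum_char]
    rw [hβ0]
    rw [sum_erase_units p (fun β => (∑ γ : (ZMod p)ˣ, D ↑γ * ep p (c * β * ↑γ)) * F β ((p:ℂ) * τ))]
    have hrest : (∑ β : (ZMod p)ˣ, (∑ γ : (ZMod p)ˣ, D ↑γ * ep p (c * ↑β * ↑γ)) * F ↑β ((p:ℂ) * τ)) =
        (starRingEnd ℂ) (D c) * (∑ u : (ZMod p)ˣ, D ↑u * ep p ↑u) *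
          (∑ β : (ZMod p)ˣ, (starRingEnd ℂ) (D ↑β) * F ↑β ((p:ℂ) * τ)) := by
      rw [Finset.mul_sum]
      refine Finset.sum_congr rfl fun β _ => ?_
      have hw : (∑ γ : (ZMod p)ˣ, D ↑γ * ep p (c * ↑β * ↑γ)) =
          (starRingEnd ℂ) (D (c * ↑β)) * ∑ u : (ZMod p)ˣ, D ↑u * ep p ↑u := by
        have := twist_sum p D (uc * β)
        rw [Units.val_mul, huc] at this
        exact this
      rw [hw, map_mul D, map_mul]
      ring
    rw [hrest]
    ring
  rw [mul_comm ((σ / (Real.sqrt p : ℂ)) * ((p:ℂ) * τ) ^ k) _]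
  -- now use hone via linear_combination
  have hIcc : (∑ n ∈ Finset.Icc 1 (p - 1), ψ (n : ZMod p) * χ (n : ZMod p) * e ((n : ℂ) / p)) =
      ∑ u : (ZMod p)ˣ, D ↑u * ep p ↑u := by
    rw [← gauss_eq p D]
    exact Finset.sum_congr rfl fun n _ => by rw [hDapp]
  have hHeq : H τ = ∑ β : (ZMod p)ˣ, (starRingEnd ℂ) (D ↑β) * F ↑β ((p:ℂ) * τ) := by
    rw [hH]
    exact Finset.sum_congr rfl fun β _ => by rw [hDapp]
  have hconj : (starRingEnd ℂ) (ψ ((2 * α : ℤ) : ZMod p) * χ ((2 * α : ℤ) : ZMod p)) =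
      (starRingEnd ℂ) (D c) := by rw [hDapp, hc]
  rw [hconj, hIcc, hHeq]
  rw [show (if ψ * χ = 1 then (1:ℂ) else 0) = (if D = 1 then (1:ℂ) else 0) by rw [hD]]
  set S := ∑ γ : (ZMod p)ˣ, D ↑γ * ∑ β : ZMod p, ep p (c * β * ↑γ) * F β ((p:ℂ) * τ) with hSdef
  calc (p:ℂ)^k * ((p:ℂ)^2 * τ)^(-k) * (S * ((σ / (Real.sqrt p : ℂ)) * ((p:ℂ) * τ)^k))
      = ((p:ℂ)^k * ((p:ℂ)^2 * τ)^(-k) * ((p:ℂ) * τ)^k) * ((σ / (Real.sqrt p : ℂ)) * S) := by ring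
    _ = (σ / (Real.sqrt p : ℂ)) * S := by rw [hone, one_mul]
    _ = _ := by rw [central]
end

section
/- Let p be an odd prime and α an integer not divisible by p. Let G : ℍ → ℂ satisfy the ε-condition: for every integer m with either p | m or χ_p(−m) ≠ χ_p(α), one has ∑_{j=0}^{p-1} e(−jm/p)·G(τ + j/p) = 0 for all τ ∈ ℍ. Define G_γ(τ) := (1/(2p))·∑_{j=0}^{p-1} e(jαγ̃²/p)·G(τ + j/p) for γ ∈ ℤ/pℤ. Then ∑_{γ=1}^{p-1} G_γ(τ) = G(τ) for all τ ∈ ℍ. (This says that a form satisfying the ε-condition is the sum of its components G_γ over γ ∈ (ℤ/pℤ)^×.) -/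
open Complex Finset

/-- The component `G_γ(τ) = (1/(2p)) ∑_{j=0}^{p-1} e(jαγ̃²/p) G(τ + j/p)`. -/
noncomputable def component (p : ℕ) (α : ℤ) (G : ℂ → ℂ) (γ : ZMod p) : ℂ → ℂ := fun τ =>
  (1 / (2 * p)) * ∑ j ∈ Finset.range p,
    e ((j : ℂ) * (α : ℂ) * (γ.val : ℂ) ^ 2 / p) * G (τ + (j : ℂ) / p)

/-!
Put `Φ j = G (τ + j / p)` for `j : ZMod p`. The sums in the ε-condition are the discrete Fourier
coefficients `𝓕 Φ m`, and `G_γ(τ) = 𝓕 Φ (-αγ²) / (2p)`. By the ε-condition, `n ↦ 𝓕 Φ (-n)`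
vanishes unless `χ(n) = χ(α)`, and every such `n` is `αu²` for exactly two `u ≠ 0`. Hence
`∑ G_γ(τ) = (1/p) ∑ₙ 𝓕 Φ n = Φ 0 = G τ` by Fourier inversion.
-/

open ZMod

theorem quadraticChar_inv {F : Type*} [Field F] [Fintype F] [DecidableEq F] (a : F) :
    quadraticChar F a⁻¹ = quadraticChar F a := by
  rw [← MulChar.inv_apply', (quadraticChar_isQuadratic F).inv]

theorem card_filter_mul_sq_eq_two {F : Type*} [Field F] [Fintype F] [DecidableEq F]
    (hF : ringChar F ≠ 2) {a n : F} (ha : a ≠ 0) (h : quadraticChar F n = quadraticChar F a) :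
    #{u | a * u ^ 2 = n} = 2 := by
  have hsqrt := quadraticChar_card_sqrts hF (a⁻¹ * n)
  rw [map_mul, quadraticChar_inv, h, ← sq, quadraticChar_sq_one ha] at hsqrt
  have hroots : ({u | a * u ^ 2 = n} : Finset F) = {x : F | x ^ 2 = a⁻¹ * n}.toFinset := by
    ext u; simp [eq_inv_mul_iff_mul_eq₀ ha]
  rw [hroots]; omega

theorem sum_mul_sq_eq_two_nsmul_sum {F M : Type*} [Field F] [Fintype F] [DecidableEq F]
    [AddCommMonoid M] (hF : ringChar F ≠ 2) {a : F} (ha : a ≠ 0) {f : F → M}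
    (hf : ∀ n, quadraticChar F n ≠ quadraticChar F a → f n = 0) :
    ∑ u, f (a * u ^ 2) = 2 • ∑ n, f n := by
  calc ∑ u, f (a * u ^ 2)
      = ∑ n, ∑ u with a * u ^ 2 = n, f (a * u ^ 2) := (sum_fiberwise _ _ _).symm
    _ = ∑ n, #{u | a * u ^ 2 = n} • f n := by
      refine sum_congr rfl fun n _ => ?_
      rw [← sum_const]
      exact sum_congr rfl fun u hu => by rw [(mem_filter.mp hu).2]
    _ = ∑ n, 2 • f n := by
      refine sum_congr rfl fun n _ => ?_
      by_cases h : quadraticChar F n = quadraticChar F a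
      · rw [card_filter_mul_sq_eq_two hF ha h]
      · simp [hf n h]
    _ = 2 • ∑ n, f n := smul_sum.symm

theorem sum_range_eq_sum_val {M : Type*} [AddCommMonoid M] (N : ℕ) [NeZero N] (f : ℕ → M) :
    ∑ j ∈ range N, f j = ∑ u : ZMod N, f u.val := by
  obtain ⟨n, rfl⟩ : ∃ n, N = n + 1 := Nat.exists_eq_succ_of_ne_zero (NeZero.ne N)
  exact (Fin.sum_univ_eq_sum_range f _).symm

theorem sum_Icc_natCast_eq_sum_univ {M : Type*} [AddCommMonoid M] (N : ℕ) [NeZero N]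
    {g : ZMod N → M} (hg : g 0 = 0) : ∑ γ ∈ Icc 1 (N - 1), g γ = ∑ u, g u := by
  rw [sum_subset (fun x hx => ?_) (fun x hxN hx => ?_), sum_range_eq_sum_val N]
  · simp
  · simp only [mem_Icc, mem_range] at hx ⊢; omega
  · obtain rfl : x = 0 := by simp only [mem_Icc, mem_range, not_and, not_le] at hx hxN; omega
    simpa using hg

theorem sum_dft {E : Type*} [AddCommGroup E] [Module ℂ E] (N : ℕ) [NeZero N]
    (Φ : ZMod N → E) : ∑ k, 𝓕 Φ k = (N : ℂ) • Φ 0 := by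
  simp only [← dft_apply_zero, dft_dft, neg_zero]

theorem e_intCast_div_natCast (N : ℕ) [NeZero N] (k : ℤ) :
    e (k / N) = stdAddChar (k : ZMod N) := by
  rw [stdAddChar_coe, e, mul_div_assoc]

noncomputable def shiftSamples (N : ℕ) (G : ℂ → ℂ) (τ : ℂ) : ZMod N → ℂ :=
  fun j => G (τ + j.val / N)

theorem sum_range_e_mul_eq_dft (N : ℕ) [NeZero N] (G : ℂ → ℂ) (τ : ℂ) (m : ℤ) :
    ∑ j ∈ range N, e (-((j : ℂ) * (m : ℂ) / N)) * G (τ + (j : ℂ) / N) =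
      𝓕 (shiftSamples N G τ) m := by
  rw [sum_range_eq_sum_val N, dft_apply]
  refine sum_congr rfl fun j _ => ?_
  have hj : -(j * (m : ZMod N)) = ((-(j.val * m) : ℤ) : ZMod N) := by
    push_cast; rw [natCast_val, cast_id]
  rw [smul_eq_mul, hj, ← e_intCast_div_natCast, shiftSamples]
  push_cast; ring_nf

theorem component_eq_dft (p : ℕ) [NeZero p] (α : ℤ) (G : ℂ → ℂ) (γ : ZMod p) (τ : ℂ) :
    component p α G γ τ = 1 / (2 * p) * 𝓕 (shiftSamples p G τ) (-(α * γ ^ 2)) := by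
  have hm : ((-(α * (γ.val : ℤ) ^ 2) : ℤ) : ZMod p) = -(α * γ ^ 2) := by
    push_cast; rw [natCast_val, cast_id]
  rw [component, ← hm, ← sum_range_e_mul_eq_dft]
  refine congrArg _ (sum_congr rfl fun j _ => ?_)
  push_cast; ring_nf

theorem sum_of_components_of_epsilon_form (p : ℕ) [Fact p.Prime] (hp2 : p ≠ 2)
    (α : ℤ) (hα : ¬ (p : ℤ) ∣ α) (G : ℂ → ℂ)
    (hε : ∀ m : ℤ, ((p : ℤ) ∣ m ∨ legendreSym p (-m) ≠ legendreSym p α) →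
      ∀ τ : ℂ, 0 < τ.im →
        ∑ j ∈ Finset.range p, e (-((j : ℂ) * (m : ℂ) / p)) * G (τ + (j : ℂ) / p) = 0) :
    ∀ τ : ℂ, 0 < τ.im →
      ∑ γ ∈ Finset.Icc 1 (p - 1), component p α G (γ : ZMod p) τ = G τ := by
  intro τ hτ
  have hchar : ringChar (ZMod p) ≠ 2 := by rwa [ringChar_zmod_n]
  have hα0 : (α : ZMod p) ≠ 0 := by rwa [Ne, intCast_zmod_eq_zero_iff_dvd]
  set f : ZMod p → ℂ := fun n => 𝓕 (shiftSamples p G τ) (-n)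
  have hf : ∀ n, quadraticChar (ZMod p) n ≠ quadraticChar (ZMod p) α → f n = 0 := by
    intro n hn
    obtain ⟨k, rfl⟩ := intCast_surjective n
    have := hε (-k) (Or.inr (by simpa [legendreSym] using hn)) τ hτ
    rwa [sum_range_e_mul_eq_dft, Int.cast_neg] at this
  have hf0 : f 0 = 0 := hf 0 <| by
    rwa [quadraticChar_zero, ne_comm, Ne, quadraticChar_eq_zero_iff]
  have hsum : ∑ n, f n = p * G τ := by
    rw [Fintype.sum_equiv (Equiv.neg _) f (𝓕 (shiftSamples p G τ)) fun _ => rfl, sum_dft]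
    simp [shiftSamples]
  calc ∑ γ ∈ Icc 1 (p - 1), component p α G γ τ
      = ∑ γ ∈ Icc 1 (p - 1), 1 / (2 * p) * f (α * (γ : ZMod p) ^ 2) :=
        sum_congr rfl fun γ _ => component_eq_dft p α G γ τ
    _ = ∑ u, 1 / (2 * p) * f (α * u ^ 2) :=
        sum_Icc_natCast_eq_sum_univ p (g := fun u => 1 / (2 * p) * f (α * u ^ 2)) (by simp [hf0])
    _ = 1 / (2 * p) * (2 • ∑ n, f n) := by
        rw [← mul_sum, sum_mul_sq_eq_two_nsmul_sum hchar hα0 hf]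
    _ = G τ := by
        have hpC : (p : ℂ) ≠ 0 := NeZero.ne _
        rw [hsum, nsmul_eq_mul, Nat.cast_ofNat]; field_simp
end
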